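/- arXiv:1111.5856 — 5 statements merged into one kernel-verified Lean document; each statement's English description precedes it below -/
import Mathlib

section
/- Let P and Q be 2 × 2 matrices with entries in the polynomial ring ℂ[x₁,…,xₙ] such that P·Q = Q·P. Then there exist polynomials a₀, a₁, b₀, b₁ ∈ ℂ[x₁,…,xₙ] and a 2 × 2 matrix Z over ℂ[x₁,…,xₙ] such that P = a₀·𝟙 + a₁·Z and Q = b₀·𝟙 + b₁·Z, where 𝟙 denotes the 2 × 2 identity matrix. -/
/-!
Two `2 × 2` matrices `P`, `Q` over a commutative ring commute exactly when the vectors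
`(P₀₀ - P₁₁, P₀₁, P₁₀)` and `(Q₀₀ - Q₁₁, Q₀₁, Q₁₀)` have vanishing `2 × 2` minors. Over a GCD
domain such as `ℂ[x₁,…,xₙ]`, two vectors with vanishing minors are multiples `s • v`, `t • v` of a
common vector `v` (divide by the gcd of one nonzero coordinate pair), and then
`Z = !![v₀, v₁; v₂, 0]` gives `P = P₁₁ • 1 + s • Z` and `Q = Q₁₁ • 1 + t • Z`.
-/

theorem exists_eq_smul_and_eq_smul_of_mul_eq_mul {R ι : Type*} [CommMonoidWithZero R]
    [IsGCDMonoid R] {u w : ι → R} (h : ∀ i j, u i * w j = u j * w i) :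
    ∃ (v : ι → R) (s t : R), u = s • v ∧ w = t • v := by
  obtain ⟨_⟩ := ‹IsGCDMonoid R›
  by_cases hu : ∀ i, u i = 0
  · exact ⟨w, 0, 1, funext fun i => by simp [hu], (one_smul R w).symm⟩
  obtain ⟨k, hk⟩ := not_forall.mp hu
  obtain ⟨s, t, hs, ht, hst⟩ := extract_gcd (u k) (w k)
  have hg : gcd (u k) (w k) ≠ 0 := fun h0 => hk (by rw [hs, h0, zero_mul])
  have hs0 : s ≠ 0 := fun h0 => hk (by rw [hs, h0, mul_zero])
  have hcop : IsRelPrime s t := gcd_isUnit_iff_isRelPrime.mp hst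
  have hcross : ∀ i, s * w i = t * u i := fun i => mul_left_cancel₀ hg <| by
    rw [← mul_assoc, ← mul_assoc, ← hs, ← ht, h k i, mul_comm]
  choose v hv using fun i => hcop.dvd_of_dvd_mul_left ⟨w i, (hcross i).symm⟩
  refine ⟨v, s, t, funext hv, funext fun i => mul_left_cancel₀ hs0 ?_⟩
  rw [hcross, hv, Pi.smul_apply, smul_eq_mul, mul_left_comm]

namespace Matrix

variable {R : Type*} [CommRing R]

def nonscalarPart (P : Matrix (Fin 2) (Fin 2) R) : Fin 3 → R :=
  ![P 0 0 - P 1 1, P 0 1, P 1 0]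

def ofNonscalarPart (v : Fin 3 → R) : Matrix (Fin 2) (Fin 2) R :=
  !![v 0, v 1; v 2, 0]

theorem ofNonscalarPart_smul (s : R) (v : Fin 3 → R) :
    ofNonscalarPart (s • v) = s • ofNonscalarPart v := by
  ext i j; fin_cases i <;> fin_cases j <;> simp [ofNonscalarPart]

theorem smul_one_add_ofNonscalarPart (P : Matrix (Fin 2) (Fin 2) R) :
    P 1 1 • 1 + ofNonscalarPart (nonscalarPart P) = P := by
  ext i j; fin_cases i <;> fin_cases j <;> simp [ofNonscalarPart, nonscalarPart]

theorem nonscalarPart_mul_eq_mul_of_commute {P Q : Matrix (Fin 2) (Fin 2) R}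
    (h : Commute P Q) (i j : Fin 3) :
    nonscalarPart P i * nonscalarPart Q j = nonscalarPart P j * nonscalarPart Q i := by
  have e00 := congrFun₂ h.eq 0 0
  have e01 := congrFun₂ h.eq 0 1
  have e10 := congrFun₂ h.eq 1 0
  simp only [mul_apply, Fin.sum_univ_two] at e00 e01 e10
  fin_cases i <;> fin_cases j <;>
    simp only [nonscalarPart, Fin.zero_eta, Fin.mk_one, Fin.reduceFinMk, cons_val_zero,
      cons_val_one, cons_val] <;>
    grind

theorem exists_eq_smul_one_add_smul_of_commute [IsGCDMonoid R]
    {P Q : Matrix (Fin 2) (Fin 2) R} (h : Commute P Q) :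
    ∃ (a₀ a₁ b₀ b₁ : R) (Z : Matrix (Fin 2) (Fin 2) R),
      P = a₀ • 1 + a₁ • Z ∧ Q = b₀ • 1 + b₁ • Z := by
  obtain ⟨v, s, t, hP, hQ⟩ :=
    exists_eq_smul_and_eq_smul_of_mul_eq_mul (nonscalarPart_mul_eq_mul_of_commute h)
  refine ⟨P 1 1, s, Q 1 1, t, ofNonscalarPart v, ?_, ?_⟩
  · rw [← ofNonscalarPart_smul, ← hP, smul_one_add_ofNonscalarPart]
  · rw [← ofNonscalarPart_smul, ← hQ, smul_one_add_ofNonscalarPart]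

end Matrix

/-- Two commuting `2 × 2` matrices over the polynomial ring `ℂ[x₁,…,xₙ]` lie in a
commutative algebra generated over the scalar matrices by a single polynomial
matrix `Z`: if `P·Q = Q·P` then `P = a₀·𝟙 + a₁·Z` and `Q = b₀·𝟙 + b₁·Z` for some
polynomials `a₀, a₁, b₀, b₁` and some polynomial matrix `Z`. -/
theorem commuting_two_by_two_polynomial_matrices (n : ℕ)
    (P Q : Matrix (Fin 2) (Fin 2) (MvPolynomial (Fin n) ℂ))
    (hcomm : P * Q = Q * P) :
    ∃ (a₀ a₁ b₀ b₁ : MvPolynomial (Fin n) ℂ)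
      (Z : Matrix (Fin 2) (Fin 2) (MvPolynomial (Fin n) ℂ)),
      P = a₀ • (1 : Matrix (Fin 2) (Fin 2) (MvPolynomial (Fin n) ℂ)) + a₁ • Z ∧
      Q = b₀ • (1 : Matrix (Fin 2) (Fin 2) (MvPolynomial (Fin n) ℂ)) + b₁ • Z := by
  exact Matrix.exists_eq_smul_one_add_smul_of_commute hcomm
end

section
/- Let R be an integral domain which is a unique factorization domain, let m ≥ 1, and let p₁,…,pₘ be nonzero elements of R such that pᵢ and pⱼ are relatively prime whenever i ≠ j (every common divisor of pᵢ and pⱼ is a unit). Let P = diag(p₁,…,pₘ), and let Q and K be m × m matrices over R satisfying P·Q = K·P. Then Kᵢᵢ = Qᵢᵢ for every i, and there exists an m × m matrix R₀ over R with zero diagonal such that Q = R₀·P + D and K = P·R₀ + D, where D = diag(Q₁₁,…,Qₘₘ). -/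
/-! Entrywise, `P·Q = K·P` reads `pᵢ Qᵢⱼ = Kᵢⱼ pⱼ`. On the diagonal this gives `Kᵢᵢ = Qᵢᵢ` after
cancelling `pᵢ`; off the diagonal `pⱼ` divides `pᵢ Qᵢⱼ` and is prime to `pᵢ`, so `Qᵢⱼ = rᵢⱼ pⱼ`,
and cancelling `pⱼ` gives `Kᵢⱼ = pᵢ rᵢⱼ`. The `rᵢⱼ` are the entries of `R₀`. -/

theorem Matrix.diagonal_mul_eq_mul_diagonal_iff {n α : Type*} [Fintype n] [DecidableEq n]
    [Semiring α] (p : n → α) (Q K : Matrix n n α) :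
    Matrix.diagonal p * Q = K * Matrix.diagonal p ↔ ∀ i j, p i * Q i j = K i j * p j := by
  simp only [← Matrix.ext_iff, Matrix.diagonal_mul, Matrix.mul_diagonal]

theorem IsRelPrime.exists_eq_mul_and_eq_mul_of_mul_eq_mul {α : Type*}
    [CommMonoidWithZero α] [IsCancelMulZero α] [DecompositionMonoid α] {a b x y : α}
    (hab : IsRelPrime a b) (hb : b ≠ 0) (h : a * x = y * b) :
    ∃ r, x = r * b ∧ y = a * r := by
  obtain ⟨r, rfl⟩ : b ∣ x := hab.symm.dvd_of_dvd_mul_left ⟨y, by rw [h, mul_comm]⟩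
  refine ⟨r, mul_comm b r, mul_right_cancel₀ hb ?_⟩
  rw [← h, mul_right_comm a r b, mul_assoc]

theorem symmetry_diagonal_symbol_structure_general
    {R : Type*} [CommRing R] [IsDomain R] [UniqueFactorizationMonoid R]
    (m : ℕ) (p : Fin m → R) (hp : ∀ i, p i ≠ 0)
    (hrel : ∀ i j, i ≠ j → IsRelPrime (p i) (p j))
    (Q K : Matrix (Fin m) (Fin m) R)
    (hsym : Matrix.diagonal p * Q = K * Matrix.diagonal p) :
    (∀ i, K i i = Q i i) ∧
    ∃ R₀ : Matrix (Fin m) (Fin m) R, (∀ i, R₀ i i = 0) ∧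
      Q = R₀ * Matrix.diagonal p + Matrix.diagonal (fun i => Q i i) ∧
      K = Matrix.diagonal p * R₀ + Matrix.diagonal (fun i => Q i i) := by
  rw [Matrix.diagonal_mul_eq_mul_diagonal_iff] at hsym
  have hdiag (i : Fin m) : K i i = Q i i :=
    (mul_left_cancel₀ (hp i) ((hsym i i).trans (mul_comm _ _))).symm
  have hoff (i j : Fin m) (hij : i ≠ j) : ∃ r, Q i j = r * p j ∧ K i j = p i * r :=
    IsRelPrime.exists_eq_mul_and_eq_mul_of_mul_eq_mul (hrel i j hij) (hp j) (hsym i j)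
  choose! r hr using hoff
  refine ⟨hdiag, Matrix.of fun i j => if i = j then 0 else r i j, fun i => by simp, ?_, ?_⟩ <;>
    ext i j <;> rcases eq_or_ne i j with rfl | hij <;>
    simp [Matrix.diagonal_mul, Matrix.mul_diagonal, *]

/-- Let `P = diag(p₁,…,pₘ)` be a diagonal matrix over a UFD whose nonzero diagonal
entries are pairwise relatively prime (no multiple components of the
characteristic variety), and let `Q`, `K` satisfy the symbol-level symmetry
condition `P·Q = K·P`. Then the diagonals of `K` and `Q` agree, and there is a
matrix `R₀` with zero diagonal such that `Q = R₀·P + D` and `K = P·R₀ + D`,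
where `D = diag(Q₁₁,…,Qₘₘ)`. -/
theorem symmetry_diagonal_symbol_structure
    {R : Type*} [CommRing R] [IsDomain R] [UniqueFactorizationMonoid R]
    (m : ℕ) (hm : 1 ≤ m) (p : Fin m → R) (hp : ∀ i, p i ≠ 0)
    (hrel : ∀ i j, i ≠ j → IsRelPrime (p i) (p j))
    (Q K : Matrix (Fin m) (Fin m) R)
    (hsym : Matrix.diagonal p * Q = K * Matrix.diagonal p) :
    (∀ i, K i i = Q i i) ∧
    ∃ R₀ : Matrix (Fin m) (Fin m) R, (∀ i, R₀ i i = 0) ∧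
      Q = R₀ * Matrix.diagonal p + Matrix.diagonal (fun i => Q i i) ∧
      K = Matrix.diagonal p * R₀ + Matrix.diagonal (fun i => Q i i) :=
  symmetry_diagonal_symbol_structure_general m p hp hrel Q K hsym
end

section
/- Let R be an integral domain which is a unique factorization domain, let m ≥ 1, and let p₁,…,pₘ be nonzero elements of R that are pairwise relatively prime. Let P = diag(p₁,…,pₘ), and let Q and K be m × m matrices over R satisfying P·Q = K·P; assume moreover that pᵢ and Qᵢᵢ are relatively prime for every i. Then the syzygy module of the pair (P, Q) is generated by (K, −P): for all m × m matrices A and B over R with A·P + B·Q = 0, there exists an m × m matrix L over R such that A = L·K and B = −L·P. -/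
/-!
Write `P = diagonal p`. Comparing entries of `P·Q = K·P` gives `pₖ Qₖⱼ = Kₖⱼ pⱼ`, so coprimality
of `pⱼ` and `pₖ` makes `pⱼ` divide every off-diagonal entry `Qₖⱼ` of the `j`-th column. In
`(B·Q)ᵢⱼ = -Aᵢⱼ pⱼ` all terms except `Bᵢⱼ Qⱼⱼ` are then multiples of `pⱼ`, and coprimality of
`pⱼ` and `Qⱼⱼ` gives `pⱼ ∣ Bᵢⱼ`, i.e. `B = L·P`. Then `A·P = -L·P·Q = -L·K·P`, and `P`
cancels.
-/

namespace Matrix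

variable {ι : Type*} [Fintype ι] [DecidableEq ι]

section DecompositionMonoid

variable {R : Type*} [CommRing R] [DecompositionMonoid R]

theorem dvd_apply_of_diagonal_mul_eq_mul_diagonal {p : ι → R}
    (hrel : ∀ i j, i ≠ j → IsRelPrime (p i) (p j)) {Q K : Matrix ι ι R}
    (hsym : diagonal p * Q = K * diagonal p) {k j : ι} (hkj : k ≠ j) : p j ∣ Q k j := by
  have hentry : p k * Q k j = K k j * p j := by
    simpa [diagonal_mul, mul_diagonal] using congr_fun₂ hsym k j
  exact (hrel j k hkj.symm).dvd_of_dvd_mul_left ⟨K k j, by rw [hentry, mul_comm]⟩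

theorem dvd_apply_of_dvd_mul_apply {κ : Type*} {d : R} {B : Matrix κ ι R} {Q : Matrix ι ι R}
    {i : κ} {j : ι} (hoff : ∀ k, k ≠ j → d ∣ Q k j) (hdiag : IsRelPrime d (Q j j))
    (h : d ∣ (B * Q) i j) : d ∣ B i j := by
  have hrest : d ∣ ∑ k ∈ Finset.univ.erase j, B i k * Q k j :=
    Finset.dvd_sum fun k hk => (hoff k (Finset.ne_of_mem_erase hk)).mul_left _
  rw [mul_apply, ← Finset.add_sum_erase _ _ (Finset.mem_univ j)] at h
  exact hdiag.dvd_of_dvd_mul_right ((dvd_add_left hrest).mp h)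

end DecompositionMonoid

theorem exists_eq_mul_diagonal_of_dvd {κ R : Type*} [CommSemiring R] {p : ι → R}
    {B : Matrix κ ι R} (h : ∀ i j, p j ∣ B i j) :
    ∃ L : Matrix κ ι R, B = L * diagonal p := by
  choose L hL using h
  exact ⟨of L, by ext i j; simp [mul_diagonal, hL, mul_comm]⟩

theorem eq_of_mul_diagonal_eq_mul_diagonal {κ R : Type*} [Ring R] [NoZeroDivisors R]
    {p : ι → R} (hp : ∀ i, p i ≠ 0) {M N : Matrix κ ι R}
    (h : M * diagonal p = N * diagonal p) : M = N := by
  ext i j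
  simpa [mul_diagonal, hp j] using congr_fun₂ h i j

end Matrix

theorem syzygy_module_generated_by_symmetry_general
    {R : Type*} [CommRing R] [IsDomain R] [UniqueFactorizationMonoid R]
    (m : ℕ) (p : Fin m → R) (hp : ∀ i, p i ≠ 0)
    (hrel : ∀ i j, i ≠ j → IsRelPrime (p i) (p j))
    (Q K : Matrix (Fin m) (Fin m) R)
    (hsym : Matrix.diagonal p * Q = K * Matrix.diagonal p)
    (hQ : ∀ i, IsRelPrime (p i) (Q i i)) :
    ∀ A B : Matrix (Fin m) (Fin m) R,
      A * Matrix.diagonal p + B * Q = 0 →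
      ∃ L : Matrix (Fin m) (Fin m) R, A = L * K ∧ B = -(L * Matrix.diagonal p) := by
  intro A B hAB
  have hBQ : ∀ i j, p j ∣ (B * Q) i j := by
    intro i j
    have hij : A i j * p j + (B * Q) i j = 0 := by
      simpa [Matrix.mul_diagonal] using congr_fun₂ hAB i j
    exact ⟨-A i j, by linear_combination hij⟩
  have hB : ∀ i j, p j ∣ B i j := fun i j =>
    Matrix.dvd_apply_of_dvd_mul_apply
      (fun _ hkj => Matrix.dvd_apply_of_diagonal_mul_eq_mul_diagonal hrel hsym hkj) (hQ j) (hBQ i j)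
  obtain ⟨L, rfl⟩ := Matrix.exists_eq_mul_diagonal_of_dvd hB
  refine ⟨-L, Matrix.eq_of_mul_diagonal_eq_mul_diagonal hp ?_, by rw [Matrix.neg_mul, neg_neg]⟩
  calc A * Matrix.diagonal p = -(L * Matrix.diagonal p * Q) := eq_neg_of_add_eq_zero_left hAB
    _ = -L * K * Matrix.diagonal p := by
      rw [Matrix.mul_assoc, hsym, ← Matrix.mul_assoc, Matrix.neg_mul, Matrix.neg_mul]

/-- Let `P = diag(p₁,…,pₘ)` be a diagonal matrix over a UFD whose nonzero diagonal
entries are pairwise relatively prime, let `Q`, `K` satisfy the symmetry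
condition `P·Q = K·P`, and assume moreover that `pᵢ` and `Qᵢᵢ` are relatively
prime for every `i` (the joint characteristic variety has codimension `> 1`).
Then the syzygy module of the pair `(P, Q)` is generated by `(K, −P)`: every
pair of matrices `(A, B)` with `A·P + B·Q = 0` has the form `(L·K, −L·P)`. -/
theorem syzygy_module_generated_by_symmetry
    {R : Type*} [CommRing R] [IsDomain R] [UniqueFactorizationMonoid R]
    (m : ℕ) (hm : 1 ≤ m) (p : Fin m → R) (hp : ∀ i, p i ≠ 0)
    (hrel : ∀ i j, i ≠ j → IsRelPrime (p i) (p j))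
    (Q K : Matrix (Fin m) (Fin m) R)
    (hsym : Matrix.diagonal p * Q = K * Matrix.diagonal p)
    (hQ : ∀ i, IsRelPrime (p i) (Q i i)) :
    ∀ A B : Matrix (Fin m) (Fin m) R,
      A * Matrix.diagonal p + B * Q = 0 →
      ∃ L : Matrix (Fin m) (Fin m) R, A = L * K ∧ B = -(L * Matrix.diagonal p) :=
  syzygy_module_generated_by_symmetry_general m p hp hrel Q K hsym hQ
end

section
/- Let n, m ≥ 1, let a ∈ ℝ, and let v : ℝ × ℝⁿ → ℝᵐ be a smooth map with v(t,x) ≠ 0 for all (t,x), satisfying for every component i ∈ {1,…,m} and every point (t,x) the nonlinear wave equation ∂ₜ²vⁱ = Σ_{j=1}^{n} ∂_{xʲ}( ‖v‖^{−2a} ∂_{xʲ}vⁱ ), where ‖v(t,x)‖ is the Euclidean norm of v(t,x) ∈ ℝᵐ. Then for every s ∈ ℝ the rescaled map ṽ(t,x) = e^{2s}·v(e^{−s}t, e^{−(1−2a)s}x) is also nowhere zero and satisfies the same system ∂ₜ²ṽⁱ = Σ_{j=1}^{n} ∂_{xʲ}( ‖ṽ‖^{−2a} ∂_{xʲ}ṽⁱ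 ) at every point. (This expresses that the scaling field ξ = t∂ₜ + (1−2a)Σⱼxʲ∂_{xʲ} + 2Σᵢvⁱ∂_{vⁱ} is a symmetry of the nonlinear wave system.) -/
/-- Partial derivative in the time variable of `f : ℝ × ℝⁿ → ℝ`. -/
noncomputable def pdt {n : ℕ} (f : ℝ × (Fin n → ℝ) → ℝ) (q : ℝ × (Fin n → ℝ)) : ℝ :=
  deriv (fun s => f (s, q.2)) q.1

/-- Partial derivative in the `j`-th space variable of `f : ℝ × ℝⁿ → ℝ`. -/
noncomputable def pdx {n : ℕ} (j : Fin n) (f : ℝ × (Fin n → ℝ) → ℝ)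
    (q : ℝ × (Fin n → ℝ)) : ℝ :=
  deriv (fun s => f (q.1, Function.update q.2 j s)) (q.2 j)

/-- `v : ℝ × ℝⁿ → ℝᵐ` is a nowhere-zero solution of the nonlinear wave system
`∂ₜ²vⁱ = Σⱼ ∂ⱼ(‖v‖^(−2a) ∂ⱼvⁱ)`, where `‖v‖^(−2a) = (Σₖ (vᵏ)²)^(−a)` is the
Euclidean norm raised to the power `−2a`. -/
def IsNonlinearWaveSolution (n m : ℕ) (a : ℝ)
    (v : ℝ × (Fin n → ℝ) → (Fin m → ℝ)) : Prop :=
  (∀ q, v q ≠ 0) ∧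
  ∀ (i : Fin m) (q : ℝ × (Fin n → ℝ)),
    pdt (pdt (fun q' => v q' i)) q
      = ∑ j : Fin n,
          pdx j (fun q' => (∑ k : Fin m, v q' k ^ 2) ^ (-a : ℝ)
            * pdx j (fun q'' => v q'' i) q') q

lemma deriv_scale (f : ℝ → ℝ) {c : ℝ} (hc : c ≠ 0) (x : ℝ) :
    deriv (fun t => f (c * t)) x = c * deriv f (c * x) := by
  by_cases h : DifferentiableAt ℝ f (c * x)
  · have h1 : HasDerivAt (fun t : ℝ => c * t) c x := by
      simpa using (hasDerivAt_id x).const_mul c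
    have h2 := (h.hasDerivAt.comp x h1).deriv
    simpa [mul_comm, Function.comp_def] using h2
  · have h2 : ¬ DifferentiableAt ℝ (fun t => f (c * t)) x := by
      intro hd
      apply h
      have h3 : DifferentiableAt ℝ (fun y : ℝ => c⁻¹ * y) (c * x) :=
        (differentiable_id.const_mul c⁻¹).differentiableAt
      have h4 : DifferentiableAt ℝ (fun t => f (c * t)) (c⁻¹ * (c * x)) := by
        rwa [inv_mul_cancel_left₀ hc]
      have h5 := h4.comp (c * x) h3
      have heq : ((fun t => f (c * t)) ∘ fun y : ℝ => c⁻¹ * y) = f := by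
        funext y; simp [Function.comp, mul_inv_cancel_left₀ hc]
      rwa [heq] at h5
    rw [deriv_zero_of_not_differentiableAt h, deriv_zero_of_not_differentiableAt h2, mul_zero]

lemma pdt_const_mul {n : ℕ} (k : ℝ) (f : ℝ × (Fin n → ℝ) → ℝ) (q : ℝ × (Fin n → ℝ)) :
    pdt (fun q' => k * f q') q = k * pdt f q := by
  unfold pdt; exact deriv_const_mul_field k

lemma pdx_const_mul {n : ℕ} (j : Fin n) (k : ℝ) (f : ℝ × (Fin n → ℝ) → ℝ)
    (q : ℝ × (Fin n → ℝ)) :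
    pdx j (fun q' => k * f q') q = k * pdx j f q := by
  unfold pdx; exact deriv_const_mul_field k

lemma pdt_scale {n : ℕ} (lam mu : ℝ) (hlam : lam ≠ 0) (f : ℝ × (Fin n → ℝ) → ℝ)
    (q : ℝ × (Fin n → ℝ)) :
    pdt (fun q' => f (lam * q'.1, fun j => mu * q'.2 j)) q
      = lam * pdt f (lam * q.1, fun j => mu * q.2 j) := by
  unfold pdt
  exact deriv_scale (fun t => f (t, fun j => mu * q.2 j)) hlam q.1

lemma pdx_scale {n : ℕ} (j : Fin n) (lam mu : ℝ) (hmu : mu ≠ 0)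
    (f : ℝ × (Fin n → ℝ) → ℝ) (q : ℝ × (Fin n → ℝ)) :
    pdx j (fun q' => f (lam * q'.1, fun j' => mu * q'.2 j')) q
      = mu * pdx j f (lam * q.1, fun j' => mu * q.2 j') := by
  unfold pdx
  have hupd : ∀ t : ℝ, (fun j' => mu * Function.update q.2 j t j')
      = Function.update (fun j' => mu * q.2 j') j (mu * t) := by
    intro t; funext j'
    rcases eq_or_ne j' j with rfl | h
    · simp
    · simp [Function.update_of_ne h]
  have h1 : (fun t => f (lam * q.1, fun j' => mu * Function.update q.2 j t j'))
      = fun t => (fun u => f (lam * q.1, Function.update (fun j' => mu * q.2 j') j u)) (mu * t) := by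
    funext t; rw [hupd]
  rw [h1]
  exact deriv_scale (fun u => f (lam * q.1, Function.update (fun j' => mu * q.2 j') j u)) hmu (q.2 j)

/-- The scaling field `ξ = t∂ₜ + (1−2a)Σⱼxʲ∂ⱼ + 2Σᵢvⁱ∂_{vⁱ}` is a symmetry of the
nonlinear wave system `vⁱₜₜ = Σⱼ ∂ⱼ(‖v‖^(−2a) ∂ⱼvⁱ)`: if the smooth nowhere-zero
map `v` is a solution, then for every `s ∈ ℝ` the rescaled map
`ṽ(t,x) = e^{2s}·v(e^{−s}t, e^{−(1−2a)s}x)` is nowhere zero and is again a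
solution. -/
theorem nonlinear_wave_scaling_symmetry (n m : ℕ) (hn : 1 ≤ n) (hm : 1 ≤ m)
    (a : ℝ) (v : ℝ × (Fin n → ℝ) → (Fin m → ℝ)) (hv : ContDiff ℝ (⊤ : ℕ∞) v)
    (hsol : IsNonlinearWaveSolution n m a v) (s : ℝ) :
    IsNonlinearWaveSolution n m a
      (fun q i => Real.exp (2 * s)
        * v (Real.exp (-s) * q.1, fun j => Real.exp (-(1 - 2 * a) * s) * q.2 j) i) := by
  obtain ⟨hv0, heq⟩ := hsol
  set c : ℝ := Real.exp (2 * s) with hc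
  set lam : ℝ := Real.exp (-s) with hlam
  set mu : ℝ := Real.exp (-(1 - 2 * a) * s) with hmu
  have hcne : c ≠ 0 := Real.exp_ne_zero _
  have hlamne : lam ≠ 0 := Real.exp_ne_zero _
  have hmune : mu ≠ 0 := Real.exp_ne_zero _
  constructor
  · intro q h
    apply hv0 (lam * q.1, fun j => mu * q.2 j)
    funext i
    have h' := congrFun h i
    simpa [hcne] using h'
  · intro i q
    set E : ℝ × (Fin n → ℝ) → ℝ × (Fin n → ℝ) :=
      fun q' => (lam * q'.1, fun j => mu * q'.2 j) with hE
    -- LHS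
    have inner_eq : pdt (fun q' => c * v (lam * q'.1, fun j => mu * q'.2 j) i)
        = fun q' => (c * lam) * pdt (fun p => v p i) (lam * q'.1, fun j => mu * q'.2 j) := by
      funext q'
      rw [pdt_const_mul c (fun q'' => v (lam * q''.1, fun j => mu * q''.2 j) i) q',
        pdt_scale lam mu hlamne (fun p => v p i) q']
      ring
    have lhs_eq : pdt (pdt (fun q' => c * v (lam * q'.1, fun j => mu * q'.2 j) i)) q
        = c * lam * lam * pdt (pdt (fun p => v p i)) (lam * q.1, fun j => mu * q.2 j) := by
      rw [inner_eq,
        pdt_const_mul (c * lam)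
          (fun q' => pdt (fun p => v p i) (lam * q'.1, fun j => mu * q'.2 j)) q,
        pdt_scale lam mu hlamne (pdt (fun p => v p i)) q]
      ring
    -- RHS terms
    have term_eq : ∀ j : Fin n,
        pdx j (fun q' => (∑ k : Fin m, (c * v (lam * q'.1, fun j' => mu * q'.2 j') k) ^ 2) ^ (-a : ℝ)
            * pdx j (fun q'' => c * v (lam * q''.1, fun j' => mu * q''.2 j') i) q') q
        = ((c ^ 2) ^ (-a : ℝ) * c * mu * mu)
            * pdx j (fun p => (∑ k : Fin m, v p k ^ 2) ^ (-a : ℝ)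
                * pdx j (fun p' => v p' i) p) (lam * q.1, fun j' => mu * q.2 j') := by
      intro j
      have hxin : ∀ q', pdx j (fun q'' => c * v (lam * q''.1, fun j' => mu * q''.2 j') i) q'
          = (c * mu) * pdx j (fun p' => v p' i) (lam * q'.1, fun j' => mu * q'.2 j') := by
        intro q'
        rw [pdx_const_mul j c (fun q'' => v (lam * q''.1, fun j' => mu * q''.2 j') i) q',
          pdx_scale j lam mu hmune (fun p' => v p' i) q']
        ring
      have hfun : (fun q' => (∑ k : Fin m, (c * v (lam * q'.1, fun j' => mu * q'.2 j') k) ^ 2) ^ (-a : ℝ)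
            * pdx j (fun q'' => c * v (lam * q''.1, fun j' => mu * q''.2 j') i) q')
          = fun q' => ((c ^ 2) ^ (-a : ℝ) * c * mu)
              * ((fun p => (∑ k : Fin m, v p k ^ 2) ^ (-a : ℝ) * pdx j (fun p' => v p' i) p)
                  (lam * q'.1, fun j' => mu * q'.2 j')) := by
        funext q'
        rw [hxin q']
        have hsum : (∑ k : Fin m, (c * v (lam * q'.1, fun j' => mu * q'.2 j') k) ^ 2)
            = c ^ 2 * ∑ k : Fin m, v (lam * q'.1, fun j' => mu * q'.2 j') k ^ 2 := by
          rw [Finset.mul_sum]; congr 1; funext k; ring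
        rw [hsum, Real.mul_rpow (sq_nonneg c)
          (Finset.sum_nonneg fun k _ => sq_nonneg _)]
        ring
      rw [hfun,
        pdx_const_mul j ((c ^ 2) ^ (-a : ℝ) * c * mu)
          (fun q' => (fun p => (∑ k : Fin m, v p k ^ 2) ^ (-a : ℝ)
              * pdx j (fun p' => v p' i) p) (lam * q'.1, fun j' => mu * q'.2 j')) q]
      have := pdx_scale j lam mu hmune
          (fun p => (∑ k : Fin m, v p k ^ 2) ^ (-a : ℝ) * pdx j (fun p' => v p' i) p) q
      rw [this]
      ring
    have key : c * lam * lam = (c ^ 2) ^ (-a : ℝ) * c * mu * mu := by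
      rw [hc, hlam, hmu, ← Real.exp_nat_mul, ← Real.exp_mul,
        ← Real.exp_add, ← Real.exp_add, ← Real.exp_add, ← Real.exp_add, ← Real.exp_add]
      congr 1; push_cast; ring
    calc pdt (pdt (fun q' => c * v (lam * q'.1, fun j => mu * q'.2 j) i)) q
        = c * lam * lam * pdt (pdt (fun p => v p i)) (lam * q.1, fun j => mu * q.2 j) := lhs_eq
      _ = ((c ^ 2) ^ (-a : ℝ) * c * mu * mu)
            * pdt (pdt (fun p => v p i)) (lam * q.1, fun j => mu * q.2 j) := by rw [key]
      _ = ∑ j : Fin n, ((c ^ 2) ^ (-a : ℝ) * c * mu * mu)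
            * pdx j (fun p => (∑ k : Fin m, v p k ^ 2) ^ (-a : ℝ)
                * pdx j (fun p' => v p' i) p) (lam * q.1, fun j' => mu * q.2 j') := by
          rw [← Finset.mul_sum, heq i (lam * q.1, fun j' => mu * q.2 j')]
      _ = _ := by
          exact (Finset.sum_congr rfl fun j _ => (term_eq j).symm)
end

section
/- For real numbers r, s, t, the Goursat equation 4(2s − t²)³ + (3r − 6st + 2t³)² = 0 holds if and only if there exist λ, μ ∈ ℝ such that r = λ³/3 + λ²μ, s = λ²/2 + λμ, and t = λ + μ. -/
/-!
In the coordinates `A = 2s − t²`, `B = 3r − 6st + 2t³` the point `ρ(λ) + μ ρ′(λ)` has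
`A = −μ²` and `B = 2μ³`, independently of `λ`; conversely `λ = t − μ` recovers the point from
`t` and `μ`. So the tangent cone is the preimage of the cuspidal cubic `4A³ + B² = 0`, which is
parametrized by `μ ↦ (−μ², 2μ³)`: on it `A ≤ 0`, and `μ = ±√(−A)` with the sign of `B`.
-/

theorem four_mul_pow_three_add_sq_eq_zero_iff (A B : ℝ) :
    4 * A ^ 3 + B ^ 2 = 0 ↔ ∃ μ : ℝ, A = -μ ^ 2 ∧ B = 2 * μ ^ 3 := by
  constructor
  · intro h
    have hA : A ≤ 0 := (Odd.pow_nonpos_iff (n := 3) (by decide)).mp (by nlinarith [sq_nonneg B])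
    obtain ⟨m, hm⟩ : ∃ m : ℝ, m ^ 2 = -A := ⟨√(-A), Real.sq_sqrt (neg_nonneg.mpr hA)⟩
    have hB : B ^ 2 = (2 * m ^ 3) ^ 2 := by
      linear_combination h - 4 * (A ^ 2 - A * m ^ 2 + m ^ 4) * hm
    rcases sq_eq_sq_iff_eq_or_eq_neg.mp hB with hB | hB
    · exact ⟨m, by linear_combination hm, hB⟩
    · exact ⟨-m, by linear_combination hm, by linear_combination hB⟩
  · rintro ⟨μ, rfl, rfl⟩
    ring

theorem exists_tangent_cone_iff {K : Type*} [Field K] [CharZero K] (r s t : K) :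
    (∃ l μ : K, r = l ^ 3 / 3 + l ^ 2 * μ ∧ s = l ^ 2 / 2 + l * μ ∧ t = l + μ) ↔
      ∃ μ : K, 2 * s - t ^ 2 = -μ ^ 2 ∧ 3 * r - 6 * s * t + 2 * t ^ 3 = 2 * μ ^ 3 := by
  constructor
  · rintro ⟨l, μ, rfl, rfl, rfl⟩
    exact ⟨μ, by ring, by ring⟩
  · rintro ⟨μ, hA, hB⟩
    refine ⟨t - μ, μ, ?_, ?_, by ring⟩
    · linear_combination (1 / 3) * hB + t * hA
    · linear_combination (1 / 2) * hA

/-- The locus of the Goursat equation `4(2s − t²)³ + (3r − 6st + 2t³)² = 0` in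
`(r,s,t)`-space is exactly the two-dimensional tangent cone `ρ(λ) + μ·ρ′(λ)` to
the twisted cubic `ρ(λ) = (λ³/3, λ²/2, λ)`. -/
theorem goursat_equation_iff_tangent_cone (r s t : ℝ) :
    4 * (2 * s - t ^ 2) ^ 3 + (3 * r - 6 * s * t + 2 * t ^ 3) ^ 2 = 0 ↔
    ∃ l μ : ℝ, r = l ^ 3 / 3 + l ^ 2 * μ ∧ s = l ^ 2 / 2 + l * μ ∧ t = l + μ := by
  rw [four_mul_pow_three_add_sq_eq_zero_iff, exists_tangent_cone_iff]
end
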